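/- Let N be a quantum channel from A to B, c > 0, and let M be any channel realizable as: (a) tensoring the input with a fixed state ω_{A₁B₁}, (b) applying a channel E from A⊗A₁ to a classical register X with log₂|X| ≤ c, (c) dephasing X in a fixed basis (classical channel), (d) applying a channel D from X⊗B₁ to B. Then for every pure input φ_{RA}: P( (id_R ⊗ M)(φ_{RA}), (id_R ⊗ N)(φ_{RA}) ) ≥ δ_{R:B}( (id_R ⊗ N)(φ_{RA}), c ), where δ_{R:B}(ρ, λ) = min { P(ρ̃, ρ) : ρ̃ a state, σ_B a state, ρ̃ ≤ 2^λ ρ_R ⊗ σ_B }. -/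

import Mathlib

open scoped Matrix Kronecker ComplexOrder

open scoped Classical in
/-- Matrix square root of a positive semidefinite matrix (0 otherwise). -/
noncomputable def msqrt {n : Type*} [Fintype n] [DecidableEq n] (A : Matrix n n ℂ) :
    Matrix n n ℂ :=
  if h : A.PosSemidef then
    (h.1.eigenvectorUnitary : Matrix n n ℂ) *
      Matrix.diagonal ((↑) ∘ (Real.sqrt ·) ∘ h.1.eigenvalues) *
      (star h.1.eigenvectorUnitary : Matrix n n ℂ)
  else 0

/-- Trace norm of a matrix. -/
noncomputable def traceNorm {n : Type*} [Fintype n] [DecidableEq n] (A : Matrix n n ℂ) : ℝ :=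
  ((msqrt (Aᴴ * A)).trace).re

/-- Fidelity of two states: `F(ρ,σ) = ‖√ρ √σ‖₁`. -/
noncomputable def fidelity {n : Type*} [Fintype n] [DecidableEq n] (ρ σ : Matrix n n ℂ) : ℝ :=
  traceNorm (msqrt ρ * msqrt σ)

/-- Purified distance `P(ρ,σ) = sqrt (1 - F(ρ,σ)^2)`. -/
noncomputable def pdist {n : Type*} [Fintype n] [DecidableEq n] (ρ σ : Matrix n n ℂ) : ℝ :=
  Real.sqrt (1 - fidelity ρ σ ^ 2)

/-- A quantum state: positive semidefinite with trace one. -/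
def IsState {n : Type*} [Fintype n] [DecidableEq n] (ρ : Matrix n n ℂ) : Prop :=
  ρ.PosSemidef ∧ ρ.trace = 1

/-- A pure state: a rank-one projection state. -/
def IsPureState {n : Type*} [Fintype n] [DecidableEq n] (ρ : Matrix n n ℂ) : Prop :=
  IsState ρ ∧ ρ * ρ = ρ

/-- Real power of a Hermitian matrix via the spectral decomposition (0 for non-Hermitian). -/
noncomputable def mrpow {n : Type*} [Fintype n] [DecidableEq n] (A : Matrix n n ℂ) (r : ℝ) :
    Matrix n n ℂ :=
  if h : A.IsHermitian then
    (h.eigenvectorUnitary : Matrix n n ℂ) *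
      Matrix.diagonal (fun i => ((h.eigenvalues i ^ r : ℝ) : ℂ)) *
      (star (h.eigenvectorUnitary : Matrix n n ℂ))
  else 0

/-- `Q_α(ρ‖σ) = Tr (σ^{(1-α)/(2α)} ρ σ^{(1-α)/(2α)})^α`. -/
noncomputable def sandwichedQ {n : Type*} [Fintype n] [DecidableEq n] (α : ℝ)
    (ρ σ : Matrix n n ℂ) : ℝ :=
  ((mrpow (mrpow σ ((1 - α) / (2 * α)) * ρ * mrpow σ ((1 - α) / (2 * α))) α).trace).re

/-- Sandwiched Rényi divergence of order α (base-2 logarithm). -/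
noncomputable def sandwichedD {n : Type*} [Fintype n] [DecidableEq n] (α : ℝ)
    (ρ σ : Matrix n n ℂ) : ℝ :=
  (α - 1)⁻¹ * Real.logb 2 (sandwichedQ α ρ σ)

/-- Conjugation by the permutation unitary `W^π` on the n-fold tensor power. -/
def permAct {X : Type*} (n : ℕ) (π : Equiv.Perm (Fin n))
    (M : Matrix (Fin n → X) (Fin n → X) ℂ) : Matrix (Fin n → X) (Fin n → X) ℂ :=
  Matrix.of fun f g => M (f ∘ π) (g ∘ π)

/-- `permAct` as a linear map. -/
def permActL (X : Type*) (n : ℕ) (π : Equiv.Perm (Fin n)) :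
    Matrix (Fin n → X) (Fin n → X) ℂ →ₗ[ℂ] Matrix (Fin n → X) (Fin n → X) ℂ where
  toFun := permAct n π
  map_add' _ _ := rfl
  map_smul' _ _ := rfl

/-- Symmetrization of a channel: `(1/n!) Σ_π W^{π⁻¹} ∘ Λ ∘ W^π`. -/
noncomputable def symmetrize {A B : Type*} (n : ℕ)
    (Λ : Matrix (Fin n → A) (Fin n → A) ℂ →ₗ[ℂ] Matrix (Fin n → B) (Fin n → B) ℂ) :
    Matrix (Fin n → A) (Fin n → A) ℂ →ₗ[ℂ] Matrix (Fin n → B) (Fin n → B) ℂ :=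
  ((n.factorial : ℂ))⁻¹ • ∑ π : Equiv.Perm (Fin n),
    (permActL B n π⁻¹) ∘ₗ Λ ∘ₗ (permActL A n π)

/-- The extension `id_R ⊗ Φ` of a superoperator, acting blockwise. -/
def idTensor (R : Type*) {A B : Type*} [Fintype A] [Fintype B]
    (Φ : Matrix A A ℂ →ₗ[ℂ] Matrix B B ℂ) :
    Matrix (R × A) (R × A) ℂ →ₗ[ℂ] Matrix (R × B) (R × B) ℂ where
  toFun M := Matrix.of fun p q => Φ (Matrix.of fun a a' => M (p.1, a) (q.1, a')) p.2 q.2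
  map_add' M N := by
    ext p q
    show Φ (Matrix.of fun a a' => (M + N) (p.1, a) (q.1, a')) p.2 q.2 = _
    rw [show (Matrix.of fun a a' => (M + N) (p.1, a) (q.1, a'))
        = (Matrix.of fun a a' => M (p.1, a) (q.1, a'))
          + (Matrix.of fun a a' => N (p.1, a) (q.1, a')) from rfl, map_add]
    rfl
  map_smul' c M := by
    ext p q
    show Φ (Matrix.of fun a a' => (c • M) (p.1, a) (q.1, a')) p.2 q.2 = _
    rw [show (Matrix.of fun a a' => (c • M) (p.1, a) (q.1, a'))
        = c • (Matrix.of fun a a' => M (p.1, a) (q.1, a')) from rfl, map_smul]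
    rfl

/-- The extension `Φ ⊗ id_S` of a superoperator, acting blockwise. -/
def idTensorR (S : Type*) {A B : Type*} [Fintype A] [Fintype B]
    (Φ : Matrix A A ℂ →ₗ[ℂ] Matrix B B ℂ) :
    Matrix (A × S) (A × S) ℂ →ₗ[ℂ] Matrix (B × S) (B × S) ℂ where
  toFun M := Matrix.of fun p q => Φ (Matrix.of fun a a' => M (a, p.2) (a', q.2)) p.1 q.1
  map_add' M N := by
    ext p q
    show Φ (Matrix.of fun a a' => (M + N) (a, p.2) (a', q.2)) p.1 q.1 = _
    rw [show (Matrix.of fun a a' => (M + N) (a, p.2) (a', q.2))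
        = (Matrix.of fun a a' => M (a, p.2) (a', q.2))
          + (Matrix.of fun a a' => N (a, p.2) (a', q.2)) from rfl, map_add]
    rfl
  map_smul' c M := by
    ext p q
    show Φ (Matrix.of fun a a' => (c • M) (a, p.2) (a', q.2)) p.1 q.1 = _
    rw [show (Matrix.of fun a a' => (c • M) (a, p.2) (a', q.2))
        = c • (Matrix.of fun a a' => M (a, p.2) (a', q.2)) from rfl, map_smul]
    rfl

/-- Choi matrix of a superoperator. -/
noncomputable def choi {A B : Type*} [Fintype A] [DecidableEq A] [Fintype B]
    (Φ : Matrix A A ℂ →ₗ[ℂ] Matrix B B ℂ) : Matrix (A × B) (A × B) ℂ :=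
  Matrix.of fun p q => Φ (Matrix.single p.1 q.1 1) p.2 q.2

/-- Quantum channel: completely positive (PSD Choi matrix) and trace-preserving. -/
def IsCPTP {A B : Type*} [Fintype A] [DecidableEq A] [Fintype B] [DecidableEq B]
    (Φ : Matrix A A ℂ →ₗ[ℂ] Matrix B B ℂ) : Prop :=
  (choi Φ).PosSemidef ∧ ∀ ρ, (Φ ρ).trace = ρ.trace

/-- n-fold tensor power `N^{⊗n}` of a superoperator, defined entrywise on the
standard matrix-unit basis. -/
noncomputable def tensorPow {A B : Type*} [Fintype A] [DecidableEq A] [Fintype B] [DecidableEq B]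
    (N : Matrix A A ℂ →ₗ[ℂ] Matrix B B ℂ) (n : ℕ) :
    Matrix (Fin n → A) (Fin n → A) ℂ →ₗ[ℂ] Matrix (Fin n → B) (Fin n → B) ℂ where
  toFun ρ := Matrix.of fun F G => ∑ f : Fin n → A, ∑ g : Fin n → A,
    ρ f g * ∏ i, (N (Matrix.single (f i) (g i) 1)) (F i) (G i)
  map_add' ρ σ := by
    ext F G
    simp [Matrix.add_apply, add_mul, Finset.sum_add_distrib]
  map_smul' c ρ := by
    ext F G
    simp [Matrix.smul_apply, Finset.mul_sum, mul_assoc]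

/-- Partial trace over the first tensor factor. -/
noncomputable def ptraceFst {R S : Type*} [Fintype R] (M : Matrix (R × S) (R × S) ℂ) : Matrix S S ℂ :=
  Matrix.of fun s s' => ∑ r, M (r, s) (r, s')

/-- Partial trace over the second tensor factor. -/
noncomputable def ptraceSnd {R S : Type*} [Fintype S] (M : Matrix (R × S) (R × S) ℂ) : Matrix R R ℂ :=
  Matrix.of fun r r' => ∑ s, M (r, s) (r', s)

/-- Rényi mutual information `I_α(R:B)_ρ = min_{σ_B} D_α(ρ_{RB}‖ρ_R ⊗ σ_B)`. -/
noncomputable def renyiMutualInfo {R B : Type*} [Fintype R] [DecidableEq R]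
    [Fintype B] [DecidableEq B] (α : ℝ) (ρRB : Matrix (R × B) (R × B) ℂ) : ℝ :=
  ⨅ σ : {σ : Matrix B B ℂ // IsState σ}, sandwichedD α ρRB ((ptraceSnd ρRB) ⊗ₖ σ.1)

/-- Canonical purification of a density matrix, with reference in the first factor. -/
noncomputable def canonPurification {A : Type*} [Fintype A] [DecidableEq A]
    (ρ : Matrix A A ℂ) : Matrix (A × A) (A × A) ℂ :=
  Matrix.of fun p q => msqrt ρ p.2 p.1 * star (msqrt ρ q.2 q.1)

/-- Channel Rényi mutual information at a fixed input state. -/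
noncomputable def channelRenyiMI {A B : Type*} [Fintype A] [DecidableEq A]
    [Fintype B] [DecidableEq B] (α : ℝ)
    (N : Matrix A A ℂ →ₗ[ℂ] Matrix B B ℂ) (ρ : Matrix A A ℂ) : ℝ :=
  renyiMutualInfo α ((idTensor A N) (canonPurification ρ))

/-- Channel Rényi mutual information (maximized over input states). -/
noncomputable def channelRenyiMIsup {A B : Type*} [Fintype A] [DecidableEq A]
    [Fintype B] [DecidableEq B] (α : ℝ)
    (N : Matrix A A ℂ →ₗ[ℂ] Matrix B B ℂ) : ℝ :=
  ⨆ ρ : {ρ : Matrix A A ℂ // IsState ρ}, channelRenyiMI α N ρ.1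

/-- Generalized fidelity for subnormalized states. -/
noncomputable def gfidelity {n : Type*} [Fintype n] [DecidableEq n] (ρ σ : Matrix n n ℂ) : ℝ :=
  fidelity ρ σ + Real.sqrt ((1 - ρ.trace.re) * (1 - σ.trace.re))

/-- Purified distance for subnormalized states. -/
noncomputable def pdistSub {n : Type*} [Fintype n] [DecidableEq n] (ρ σ : Matrix n n ℂ) : ℝ :=
  Real.sqrt (1 - gfidelity ρ σ ^ 2)

/-- Subnormalized state. -/
def IsSubState {n : Type*} [Fintype n] [DecidableEq n] (ρ : Matrix n n ℂ) : Prop :=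
  ρ.PosSemidef ∧ ρ.trace.re ≤ 1

/-- Smoothing quantity for the max-information (with normalized smoothing states). -/
noncomputable def deltaRB {R B : Type*} [Fintype R] [DecidableEq R] [Fintype B] [DecidableEq B]
    (ρ : Matrix (R × B) (R × B) ℂ) (lam : ℝ) : ℝ :=
  sInf {x | ∃ ρ' σ, IsState ρ' ∧ IsState σ ∧
    ((((2 : ℝ) ^ lam : ℝ) : ℂ) • ((ptraceSnd ρ) ⊗ₖ σ) - ρ').PosSemidef ∧ x = pdist ρ' ρ}

/-- Fully dephasing channel in the standard basis. -/
noncomputable def dephase (X : Type*) [Fintype X] [DecidableEq X] :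
    Matrix X X ℂ →ₗ[ℂ] Matrix X X ℂ where
  toFun ρ := Matrix.of fun x y => if x = y then ρ x x else 0
  map_add' ρ τ := by
    ext x y
    by_cases h : x = y <;> simp [h, Matrix.add_apply]
  map_smul' c ρ := by
    ext x y
    by_cases h : x = y <;> simp [h, Matrix.smul_apply]

section AuxLemmas
set_option linter.unusedSectionVars false
set_option linter.unusedVariables false

open Matrix

variable {n : Type*} [Fintype n] [DecidableEq n]

lemma posSemidef_finsum {ι : Type*} (s : Finset ι) (f : ι → Matrix n n ℂ)
    (h : ∀ i ∈ s, (f i).PosSemidef) : (∑ i ∈ s, f i).PosSemidef :=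
  Finset.sum_induction f _ (fun _ _ ha hb => ha.add hb) Matrix.PosSemidef.zero h

lemma posSemidef_real_smul {M : Matrix n n ℂ} (hM : M.PosSemidef) {r : ℝ} (hr : 0 ≤ r) :
    (((r : ℂ)) • M).PosSemidef := by
  refine Matrix.posSemidef_iff_dotProduct_mulVec.mpr ⟨?_, fun x => ?_⟩
  · show ((r : ℂ) • M)ᴴ = _
    rw [Matrix.conjTranspose_smul, Complex.star_def, Complex.conj_ofReal, hM.1.eq]
  · rw [Matrix.smul_mulVec, dotProduct_smul, smul_eq_mul]
    exact mul_nonneg (Complex.zero_le_real.mpr hr) (hM.dotProduct_mulVec_nonneg x)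

open scoped MatrixOrder in
lemma exists_eq_conjTranspose_mul_self' {m : Type*} [Fintype m] [DecidableEq m]
    {M : Matrix m m ℂ} (h : M.PosSemidef) : ∃ B : Matrix m m ℂ, M = Bᴴ * B := by
  obtain ⟨b, hb⟩ := CStarAlgebra.nonneg_iff_eq_star_mul_self.mp h.nonneg
  exact ⟨b, hb⟩

lemma conjTranspose_kron {p q : Type*} [Fintype p] (P : Matrix n n ℂ) (Q : Matrix p p ℂ) :
    (P ⊗ₖ Q)ᴴ = Pᴴ ⊗ₖ Qᴴ := by
  ext ⟨a, b⟩ ⟨c, d⟩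
  simp [Matrix.conjTranspose_apply, Matrix.kroneckerMap_apply, star_mul']

lemma posSemidef_kron {p : Type*} [Fintype p] [DecidableEq p]
    {P : Matrix n n ℂ} {Q : Matrix p p ℂ} (hP : P.PosSemidef) (hQ : Q.PosSemidef) :
    (P ⊗ₖ Q).PosSemidef := by
  obtain ⟨P₁, rfl⟩ := exists_eq_conjTranspose_mul_self' hP
  obtain ⟨Q₁, rfl⟩ := exists_eq_conjTranspose_mul_self' hQ
  have hkey : (P₁ᴴ * P₁) ⊗ₖ (Q₁ᴴ * Q₁) = (P₁ ⊗ₖ Q₁)ᴴ * (P₁ ⊗ₖ Q₁) := by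
    ext ⟨a, b⟩ ⟨c, d⟩
    simp only [Matrix.mul_apply, Matrix.kroneckerMap_apply, Matrix.conjTranspose_apply,
      Fintype.sum_prod_type, star_mul', Finset.sum_mul, Finset.mul_sum]
    rw [Finset.sum_comm]
    refine Finset.sum_congr rfl fun k _ => Finset.sum_congr rfl fun l _ => ?_
    ring
  rw [hkey]
  exact Matrix.posSemidef_conjTranspose_mul_self _

variable {A B R : Type*} [Fintype A] [DecidableEq A] [Fintype B] [DecidableEq B]
  [Fintype R] [DecidableEq R]

lemma sum4_comm {α β γ δ M : Type*} [Fintype α] [Fintype β] [Fintype γ] [Fintype δ]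
    [AddCommMonoid M] (f : α → β → γ → δ → M) :
    ∑ a, ∑ b, ∑ c, ∑ d, f a b c d = ∑ c, ∑ d, ∑ b, ∑ a, f a b c d := by
  have h1 : ∀ (g : α → γ → δ → M), ∑ a, ∑ c, ∑ d, g a c d = ∑ c, ∑ d, ∑ a, g a c d := by
    intro g
    rw [Finset.sum_comm]
    exact Finset.sum_congr rfl fun c _ => Finset.sum_comm
  rw [Finset.sum_comm]
  rw [show (∑ b, ∑ a, ∑ c, ∑ d, f a b c d) = ∑ b, ∑ c, ∑ d, ∑ a, f a b c d from
    Finset.sum_congr rfl fun b _ => h1 (fun a c d => f a b c d)]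
  rw [Finset.sum_comm]
  exact Finset.sum_congr rfl fun c _ => Finset.sum_comm

lemma map_apply_eq_sum_choi (Φ : Matrix A A ℂ →ₗ[ℂ] Matrix B B ℂ) (m : Matrix A A ℂ) (b b' : B) :
    Φ m b b' = ∑ a : A, ∑ a' : A, m a a' * Φ (Matrix.single a a' 1) b b' := by
  conv_lhs => rw [Matrix.matrix_eq_sum_single m]
  simp only [map_sum, Matrix.sum_apply]
  refine Finset.sum_congr rfl fun a _ => Finset.sum_congr rfl fun a' _ => ?_
  rw [show Matrix.single a a' (m a a') = m a a' • Matrix.single a a' (1 : ℂ) by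
    rw [Matrix.smul_single, smul_eq_mul, mul_one], _root_.map_smul]
  simp [Matrix.smul_apply]

lemma idTensor_apply_eq (Φ : Matrix A A ℂ →ₗ[ℂ] Matrix B B ℂ)
    (ρ : Matrix (R × A) (R × A) ℂ) (p q : R × B) :
    (idTensor R Φ) ρ p q
      = ∑ a : A, ∑ a' : A, ρ (p.1, a) (q.1, a') * choi Φ (a, p.2) (a', q.2) :=
  map_apply_eq_sum_choi Φ _ _ _

lemma idTensor_posSemidef (Φ : Matrix A A ℂ →ₗ[ℂ] Matrix B B ℂ)
    (hΦ : (choi Φ).PosSemidef) {ρ : Matrix (R × A) (R × A) ℂ} (hρ : ρ.PosSemidef) :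
    ((idTensor R Φ) ρ).PosSemidef := by
  obtain ⟨Bm, hB⟩ := exists_eq_conjTranspose_mul_self' hΦ
  set L : (A × B) → Matrix (R × B) (R × A) ℂ :=
    fun k => Matrix.of fun p q => if p.1 = q.1 then star (Bm k (q.2, p.2)) else 0 with hL
  have key : (idTensor R Φ) ρ = ∑ k : A × B, L k * ρ * (L k)ᴴ := by
    ext p q
    rw [idTensor_apply_eq, hB]
    simp only [Matrix.sum_apply, Matrix.mul_apply, Matrix.conjTranspose_apply, hL,
      Matrix.of_apply, Fintype.sum_prod_type, apply_ite (star : ℂ → ℂ), star_star, star_zero,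
      ite_mul, mul_ite, zero_mul, mul_zero, Finset.sum_ite_irrel, Finset.sum_const_zero,
      Finset.sum_ite_eq, Finset.sum_ite_eq',
      Finset.mem_univ, if_true, Finset.sum_mul, Finset.mul_sum]
    rw [sum4_comm]
    refine Finset.sum_congr rfl fun _ _ => Finset.sum_congr rfl fun _ _ =>
      Finset.sum_congr rfl fun _ _ => Finset.sum_congr rfl fun _ _ => ?_
    ring
  rw [key]
  exact posSemidef_finsum _ _ fun k _ => hρ.mul_mul_conjTranspose_same (L k)

lemma map_posSemidef (Φ : Matrix A A ℂ →ₗ[ℂ] Matrix B B ℂ)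
    (hΦ : (choi Φ).PosSemidef) {ρ : Matrix A A ℂ} (hρ : ρ.PosSemidef) :
    (Φ ρ).PosSemidef := by
  have h1 : (ρ.submatrix (Prod.snd : Unit × A → A) Prod.snd).PosSemidef := hρ.submatrix _
  have h2 := (idTensor_posSemidef (R := Unit) Φ hΦ h1).submatrix
    (fun b : B => ((), b))
  have h3 : ((idTensor Unit Φ) (ρ.submatrix Prod.snd Prod.snd)).submatrix
      (fun b : B => ((), b)) (fun b : B => ((), b)) = Φ ρ := by
    ext b b'
    rfl
  rwa [h3] at h2

lemma idTensor_trace (Φ : Matrix A A ℂ →ₗ[ℂ] Matrix B B ℂ)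
    (hΦ : ∀ ρ, (Φ ρ).trace = ρ.trace) (ρ : Matrix (R × A) (R × A) ℂ) :
    ((idTensor R Φ) ρ).trace = ρ.trace := by
  simp only [Matrix.trace, Matrix.diag, Fintype.sum_prod_type]
  refine Finset.sum_congr rfl fun r _ => ?_
  exact hΦ (Matrix.of fun a a' => ρ (r, a) (r, a'))

lemma ptraceSnd_idTensor (Φ : Matrix A A ℂ →ₗ[ℂ] Matrix B B ℂ)
    (hΦ : ∀ ρ, (Φ ρ).trace = ρ.trace) (ρ : Matrix (R × A) (R × A) ℂ) :
    ptraceSnd ((idTensor R Φ) ρ) = ptraceSnd ρ := by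
  ext r r'
  show ∑ b : B, Φ (Matrix.of fun a a' => ρ (r, a) (r', a')) b b = ∑ a : A, ρ (r, a) (r', a)
  exact hΦ (Matrix.of fun a a' => ρ (r, a) (r', a'))

lemma ptraceFst_posSemidef {M : Matrix (R × A) (R × A) ℂ} (hM : M.PosSemidef) :
    (ptraceFst M).PosSemidef := by
  have : ptraceFst M = ∑ r : R, M.submatrix (fun a : A => (r, a)) (fun a : A => (r, a)) := by
    ext a a'
    simp [ptraceFst, Matrix.sum_apply]
  rw [this]
  exact posSemidef_finsum _ _ fun r _ => hM.submatrix _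

lemma ptraceSnd_posSemidef {M : Matrix (R × A) (R × A) ℂ} (hM : M.PosSemidef) :
    (ptraceSnd M).PosSemidef := by
  have : ptraceSnd M = ∑ a : A, M.submatrix (fun r : R => (r, a)) (fun r : R => (r, a)) := by
    ext r r'
    simp [ptraceSnd, Matrix.sum_apply]
  rw [this]
  exact posSemidef_finsum _ _ fun a _ => hM.submatrix _

lemma ptraceFst_trace (M : Matrix (R × A) (R × A) ℂ) : (ptraceFst M).trace = M.trace := by
  simp only [Matrix.trace, Matrix.diag, ptraceFst, Matrix.of_apply, Fintype.sum_prod_type]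
  exact Finset.sum_comm

lemma idTensor_comp {C : Type*} [Fintype C] [DecidableEq C]
    (Φ₁ : Matrix A A ℂ →ₗ[ℂ] Matrix B B ℂ) (Φ₂ : Matrix B B ℂ →ₗ[ℂ] Matrix C C ℂ) :
    idTensor R (Φ₂ ∘ₗ Φ₁) = (idTensor R Φ₂) ∘ₗ (idTensor R Φ₁) := rfl

lemma idTensor_kron (Φ : Matrix A A ℂ →ₗ[ℂ] Matrix B B ℂ)
    (P : Matrix R R ℂ) (Q : Matrix A A ℂ) :
    (idTensor R Φ) (P ⊗ₖ Q) = P ⊗ₖ (Φ Q) := by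
  ext ⟨r, b⟩ ⟨r', b'⟩
  show Φ (Matrix.of fun a a' => P r r' * Q a a') b b' = P r r' * Φ Q b b'
  rw [show (Matrix.of fun a a' => P r r' * Q a a') = P r r' • Q by
    ext a a'; simp [Matrix.smul_apply], _root_.map_smul]
  simp [Matrix.smul_apply]

end AuxLemmas
set_option maxHeartbeats 1000000 in
theorem converse_bound_one_shot {A B A1 B1 X R : Type*} [Fintype A] [DecidableEq A]
    [Fintype B] [DecidableEq B] [Fintype A1] [DecidableEq A1] [Fintype B1] [DecidableEq B1]
    [Fintype X] [DecidableEq X] [Fintype R] [DecidableEq R]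
    (N M : Matrix A A ℂ →ₗ[ℂ] Matrix B B ℂ) (hN : IsCPTP N) (hM : IsCPTP M)
    (c : ℝ) (hc : 0 < c)
    (ω : Matrix (A1 × B1) (A1 × B1) ℂ) (hω : IsState ω)
    (E : Matrix (A × A1) (A × A1) ℂ →ₗ[ℂ] Matrix X X ℂ) (hE : IsCPTP E)
    (D : Matrix (X × B1) (X × B1) ℂ →ₗ[ℂ] Matrix B B ℂ) (hD : IsCPTP D)
    (hX : Real.logb 2 (Fintype.card X) ≤ c)
    (hreal : ∀ ρ : Matrix A A ℂ,
      M ρ = D ((idTensorR B1 ((dephase X) ∘ₗ E))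
        (Matrix.reindex (Equiv.prodAssoc A A1 B1).symm (Equiv.prodAssoc A A1 B1).symm
          (ρ ⊗ₖ ω))))
    (φ : Matrix (R × A) (R × A) ℂ) (hφ : IsPureState φ) :
    deltaRB ((idTensor R N) φ) c ≤ pdist ((idTensor R M) φ) ((idTensor R N) φ) := by
  classical
  have hφpsd : φ.PosSemidef := hφ.1.1
  -- nonemptiness of X
  have hRA : Nonempty (R × A) := by
    by_contra h
    rw [not_nonempty_iff] at h
    have := hφ.1.2
    simp [Matrix.trace, Finset.univ_eq_empty] at this
  have hA1B1 : Nonempty (A1 × B1) := by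
    by_contra h
    rw [not_nonempty_iff] at h
    have := hω.2
    simp [Matrix.trace, Finset.univ_eq_empty] at this
  have hXne : Nonempty X := by
    by_contra h
    rw [not_nonempty_iff] at h
    have h1 := hE.2 (1 : Matrix (A × A1) (A × A1) ℂ)
    rw [Matrix.trace_one] at h1
    have h0 : (E (1 : Matrix (A × A1) (A × A1) ℂ)).trace = 0 := by
      simp [Matrix.trace, Finset.univ_eq_empty]
    rw [h0] at h1
    haveI : Nonempty A := ⟨(Classical.choice hRA).2⟩
    haveI : Nonempty A1 := ⟨(Classical.choice hA1B1).1⟩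
    exact (Nat.cast_ne_zero (R := ℂ)).mpr Fintype.card_ne_zero h1.symm
  haveI := hXne
  have hcardpos : (0 : ℝ) < (Fintype.card X : ℝ) := by exact_mod_cast Fintype.card_pos
  have hcard : (Fintype.card X : ℝ) ≤ (2 : ℝ) ^ c := by
    have h2 : (Fintype.card X : ℝ) = (2 : ℝ) ^ (Real.logb 2 (Fintype.card X)) :=
      (Real.rpow_logb (by norm_num) (by norm_num) hcardpos).symm
    calc (Fintype.card X : ℝ) = (2 : ℝ) ^ (Real.logb 2 (Fintype.card X)) := h2
      _ ≤ (2 : ℝ) ^ c := Real.rpow_le_rpow_of_exponent_le (by norm_num) hX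
  -- the fixed output state σ
  set τ : Matrix (X × B1) (X × B1) ℂ :=
    ((Fintype.card X : ℂ))⁻¹ • ((1 : Matrix X X ℂ) ⊗ₖ ptraceFst ω) with hτ
  set σ : Matrix B B ℂ := D τ with hσ
  have hωB1psd : (ptraceFst ω).PosSemidef := ptraceFst_posSemidef hω.1
  have hωB1tr : (ptraceFst ω).trace = 1 := by rw [ptraceFst_trace, hω.2]
  have hτpsd : τ.PosSemidef := by
    rw [hτ, show ((Fintype.card X : ℂ))⁻¹ = (((Fintype.card X : ℝ)⁻¹ : ℝ) : ℂ) by push_cast; ring]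
    exact posSemidef_real_smul (posSemidef_kron Matrix.PosSemidef.one hωB1psd) (by positivity)
  have hσstate : IsState σ := by
    constructor
    · exact map_posSemidef D hD.1 hτpsd
    · rw [hσ, hD.2, hτ, Matrix.trace_smul, Matrix.trace_kronecker, Matrix.trace_one, hωB1tr]
      rw [smul_eq_mul, mul_one]
      have : (Fintype.card X : ℂ) ≠ 0 := (Nat.cast_ne_zero (R := ℂ)).mpr Fintype.card_ne_zero
      field_simp
  -- realization as a composition
  set Kmap : Matrix A A ℂ →ₗ[ℂ] Matrix ((A × A1) × B1) ((A × A1) × B1) ℂ :=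
    { toFun := fun ρ => Matrix.reindex (Equiv.prodAssoc A A1 B1).symm
        (Equiv.prodAssoc A A1 B1).symm (ρ ⊗ₖ ω)
      map_add' := fun x y => by
        ext p q
        simp [Matrix.add_kronecker, Matrix.reindex_apply, Matrix.submatrix_apply,
          Matrix.add_apply]
      map_smul' := fun cc x => by
        ext p q
        simp [Matrix.smul_kronecker, Matrix.reindex_apply, Matrix.submatrix_apply,
          Matrix.smul_apply] } with hK
  set G : Matrix A A ℂ →ₗ[ℂ] Matrix (X × B1) (X × B1) ℂ :=
    (idTensorR B1 ((dephase X) ∘ₗ E)) ∘ₗ Kmap with hG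
  have hMeq : M = D ∘ₗ G := LinearMap.ext fun ρ => hreal ρ
  set Φbig : Matrix (R × (X × B1)) (R × (X × B1)) ℂ := (idTensor R G) φ with hΦbig
  have hρM : (idTensor R M) φ = (idTensor R D) Φbig := by
    rw [hMeq, idTensor_comp]; rfl
  -- blocks of Φbig
  set mmat : R → R → B1 → B1 → Matrix (A × A1) (A × A1) ℂ :=
    fun r r' b1 b1' => Matrix.of fun cc cc' =>
      φ (r, cc.1) (r', cc'.1) * ω (cc.2, b1) (cc'.2, b1') with hmmat
  have hΦbig_apply : ∀ (r r' : R) (x x' : X) (b1 b1' : B1),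
      Φbig (r, (x, b1)) (r', (x', b1'))
        = if x = x' then E (mmat r r' b1 b1') x x else 0 := fun _ _ _ _ _ _ => rfl
  set Ψ : X → Matrix (R × B1) (R × B1) ℂ :=
    fun x => Matrix.of fun p q => E (mmat p.1 q.1 p.2 q.2) x x with hΨ
  have hΞpsd : ((φ ⊗ₖ ω).submatrix
      (fun z : (R × B1) × (A × A1) => ((z.1.1, z.2.1), (z.2.2, z.1.2)))
      (fun z : (R × B1) × (A × A1) => ((z.1.1, z.2.1), (z.2.2, z.1.2)))).PosSemidef :=
    (posSemidef_kron hφpsd hω.1).submatrix _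
  have hΨpsd : ∀ x, (Ψ x).PosSemidef := by
    intro x
    have h2 := (idTensor_posSemidef (R := R × B1) E hE.1 hΞpsd).submatrix
      (fun p : R × B1 => (p, x))
    have h3 : (((idTensor (R × B1) E) ((φ ⊗ₖ ω).submatrix
        (fun z : (R × B1) × (A × A1) => ((z.1.1, z.2.1), (z.2.2, z.1.2)))
        (fun z : (R × B1) × (A × A1) => ((z.1.1, z.2.1), (z.2.2, z.1.2))))).submatrix
        (fun p : R × B1 => (p, x)) (fun p : R × B1 => (p, x))) = Ψ x := by
      ext p q
      rfl
    rwa [h3] at h2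
  have hΨsum : ∀ (r r' : R) (b1 b1' : B1),
      ∑ x : X, Ψ x (r, b1) (r', b1') = ptraceSnd φ r r' * ptraceFst ω b1 b1' := by
    intro r r' b1 b1'
    have h1 : ∑ x : X, Ψ x (r, b1) (r', b1') = (E (mmat r r' b1 b1')).trace := rfl
    rw [h1, hE.2]
    show ∑ cc : A × A1, (φ (r, cc.1) (r', cc.1) * ω (cc.2, b1) (cc.2, b1')) = _
    rw [Fintype.sum_prod_type]
    rw [show ptraceSnd φ r r' * ptraceFst ω b1 b1'
      = (∑ a : A, φ (r, a) (r', a)) * (∑ a1 : A1, ω (a1, b1) (a1, b1')) from rfl]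
    rw [Finset.sum_mul_sum]
  -- std basis matrix facts
  have hstd : ∀ (x y y' : X), Matrix.single x x (1 : ℂ) y y'
      = if x = y ∧ x = y' then 1 else 0 := fun _ _ _ => rfl
  have hstdpsd : ∀ x : X, (Matrix.single x x (1 : ℂ)).PosSemidef := by
    intro x
    have hdg : Matrix.single x x (1 : ℂ)
        = Matrix.diagonal (fun y => if x = y then 1 else 0) := by
      ext y y'
      rw [hstd x y y', Matrix.diagonal_apply]
      by_cases h1 : x = y <;> by_cases h2 : x = y' <;> by_cases h3 : y = y' <;> simp_all
    rw [hdg]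
    refine Matrix.posSemidef_diagonal_iff.mpr fun i => ?_
    by_cases h : x = i <;> simp [h]
  -- the operator inequality before applying D
  set Ω : Matrix (R × (X × B1)) (R × (X × B1)) ℂ :=
    ptraceSnd φ ⊗ₖ ((1 : Matrix X X ℂ) ⊗ₖ ptraceFst ω) with hΩ
  set emb : R × (X × B1) → (R × B1) × X := fun p => ((p.1, p.2.2), p.2.1) with hemb
  have hdecomp : Ω - Φbig = ∑ x : X,
      (((∑ x' ∈ Finset.univ.erase x, Ψ x') ⊗ₖ Matrix.single x x (1 : ℂ)).submatrix
        emb emb) := by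
    ext ⟨r, y, b1⟩ ⟨r', y', b1'⟩
    simp only [Matrix.sub_apply, Matrix.sum_apply, Matrix.submatrix_apply, hemb,
      Matrix.kroneckerMap_apply, hΩ, Matrix.one_apply, hΦbig_apply, hstd]
    by_cases hyy : y = y'
    · subst hyy
      rw [if_pos rfl, if_pos rfl, one_mul]
      have hite : ∀ x : X, ((∑ cx ∈ Finset.univ.erase x, Ψ cx (r, b1) (r', b1'))
            * (if x = y ∧ x = y then (1:ℂ) else 0))
          = if x = y then (∑ cx ∈ Finset.univ.erase x, Ψ cx (r, b1) (r', b1')) else 0 := by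
        intro x
        by_cases h : x = y <;> simp [h]
      rw [Finset.sum_congr rfl fun x _ => hite x, Finset.sum_ite_eq' Finset.univ y _,
        if_pos (Finset.mem_univ y)]
      have hE1 : E (mmat r r' b1 b1') y y = Ψ y (r, b1) (r', b1') := rfl
      rw [hE1, ← hΨsum r r' b1 b1',
        ← Finset.add_sum_erase _ (fun x => Ψ x (r, b1) (r', b1')) (Finset.mem_univ y)]
      ring
    · rw [if_neg hyy, if_neg hyy]
      have hite : ∀ x : X, ((∑ cx ∈ Finset.univ.erase x, Ψ cx (r, b1) (r', b1'))
          * (if x = y ∧ x = y' then (1:ℂ) else 0)) = 0 := by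
        intro x
        rw [if_neg, mul_zero]
        rintro ⟨h1, h2⟩
        exact hyy (h1.symm.trans h2)
      rw [Finset.sum_congr rfl fun x _ => hite x]
      simp
  have hΩpsd : Ω.PosSemidef :=
    posSemidef_kron (ptraceSnd_posSemidef hφpsd)
      (posSemidef_kron Matrix.PosSemidef.one hωB1psd)
  have hsub : (Ω - Φbig).PosSemidef := by
    rw [hdecomp]
    refine posSemidef_finsum _ _ fun x _ => ?_
    exact (posSemidef_kron (posSemidef_finsum _ _ fun x' _ => hΨpsd x') (hstdpsd x)).submatrix emb
  have hkronsm : ptraceSnd φ ⊗ₖ τ = ((Fintype.card X : ℂ))⁻¹ • Ω := by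
    rw [hτ, Matrix.kronecker_smul, hΩ]
  have hinner : (((2:ℝ) ^ c : ℝ) : ℂ) • (ptraceSnd φ ⊗ₖ τ) - Φbig
      = ((((2:ℝ) ^ c * (Fintype.card X : ℝ)⁻¹ - 1 : ℝ)) : ℂ) • Ω + (Ω - Φbig) := by
    rw [hkronsm, Complex.ofReal_sub, Complex.ofReal_mul, Complex.ofReal_inv,
      Complex.ofReal_natCast, Complex.ofReal_one]
    module
  have hc0 : (0:ℝ) ≤ (2:ℝ) ^ c * (Fintype.card X : ℝ)⁻¹ - 1 := by
    rw [sub_nonneg, ← div_eq_mul_inv, le_div_iff₀ hcardpos, one_mul]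
    exact hcard
  have hinnerpsd : ((((2:ℝ) ^ c : ℝ) : ℂ) • (ptraceSnd φ ⊗ₖ τ) - Φbig).PosSemidef := by
    rw [hinner]
    exact (posSemidef_real_smul hΩpsd hc0).add hsub
  have hfinal : (((2:ℝ) ^ c : ℝ) : ℂ) • (ptraceSnd φ ⊗ₖ σ) - (idTensor R M) φ
      = (idTensor R D) ((((2:ℝ) ^ c : ℝ) : ℂ) • (ptraceSnd φ ⊗ₖ τ) - Φbig) := by
    rw [hρM, map_sub,
      _root_.map_smul (idTensor R D) ((((2:ℝ) ^ c : ℝ) : ℂ)) (ptraceSnd φ ⊗ₖ τ),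
      idTensor_kron D (ptraceSnd φ) τ]
  have htargetpsd : ((((2:ℝ) ^ c : ℝ) : ℂ) • (ptraceSnd φ ⊗ₖ σ)
      - (idTensor R M) φ).PosSemidef := by
    rw [hfinal]
    exact idTensor_posSemidef D hD.1 hinnerpsd
  -- conclude
  have hρMstate : IsState ((idTensor R M) φ) := by
    constructor
    · exact idTensor_posSemidef M hM.1 hφpsd
    · rw [idTensor_trace M hM.2, hφ.1.2]
  have hptr : ptraceSnd ((idTensor R N) φ) = ptraceSnd φ := ptraceSnd_idTensor N hN.2 φ
  refine csInf_le ⟨0, ?_⟩ ?_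
  · rintro x ⟨ρ', σ', _, _, _, rfl⟩
    exact Real.sqrt_nonneg _
  · refine ⟨(idTensor R M) φ, σ, hρMstate, hσstate, ?_, rfl⟩
    rw [hptr]
    exact htargetpsd
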